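/- (Verification lemma.) Let (Ω, F, (F_t)_{t ≥ 0}, ℙ) be a filtered probability space satisfying the usual conditions, X an adapted real-valued process with right-continuous paths and X_0 = 0 a.s., r > 0, K > 0, and G(z) = (K − e^z)^+. Fix y ∈ ℝ and for each x ∈ ℝ set σ_x = inf{t ≥ 0 : x + X_t < y} (inf ∅ = ∞). Let V : ℝ → ℝ be bounded and continuous, and assume: (i) for every x, the process t ↦ e^{−r (t ∧ σ_x)} V(x + X_{t ∧ σ_x}) is a martingale with respect to (F_t); (ii) for every x, the process t ↦ e^{−r t} V(x + X_t) is a supermartingale with respect to (F_t); (iii) V(z) = G(z) for all z ≤ y; (iv) V(z) ≥ G(z) for all z ∈ ℝ. Then for every x ∈ ℝ, V(x) = sup_{τ} E[e^{−r τ} G(x + X_τ) 1_{{τ < ∞}}], the supremum being over all stopping times τ : Ω → [0, ∞], and the supremum is attained at τ = σ_x. -/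

import Mathlib

open MeasureTheory ProbabilityTheory Set Filter
open scoped ENNReal NNReal Classical

noncomputable section

namespace AKLevy

variable {Ω : Type*}

/-- Running supremum `X̄_t = sup_{0 ≤ s ≤ t} X_s` of a process. -/
def runSup (X : ℝ → Ω → ℝ) (t : ℝ) (ω : Ω) : ℝ :=
  sSup ((fun s => X s ω) '' Set.Icc 0 t)

/-- Running infimum `X̲_t = inf_{0 ≤ s ≤ t} X_s` of a process. -/
def runInf (X : ℝ → Ω → ℝ) (t : ℝ) (ω : Ω) : ℝ :=
  sInf ((fun s => X s ω) '' Set.Icc 0 t)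

/-- All-time supremum `X̄_∞ = sup_{t ≥ 0} X_t`. -/
def supAll (X : ℝ → Ω → ℝ) (ω : Ω) : ℝ :=
  sSup ((fun s => X s ω) '' Set.Ici 0)

/-- All-time infimum `X̲_∞ = inf_{t ≥ 0} X_t`. -/
def infAll (X : ℝ → Ω → ℝ) (ω : Ω) : ℝ :=
  sInf ((fun s => X s ω) '' Set.Ici 0)

/-- `X` is a real-valued Lévy process with respect to the filtration `ℱ`,
on a filtered probability space satisfying the usual conditions. -/
structure IsLevy [m0 : MeasurableSpace Ω] (P : Measure Ω) (ℱ : Filtration ℝ m0)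
    (X : ℝ → Ω → ℝ) : Prop where
  isProb : IsProbabilityMeasure P
  adapted : ∀ t : ℝ, 0 ≤ t → StronglyMeasurable[ℱ t] (X t)
  zero : ∀ᵐ ω ∂P, X 0 ω = 0
  rightCont : ∀ ω, ∀ t : ℝ, 0 ≤ t → ContinuousWithinAt (fun s => X s ω) (Set.Ici t) t
  leftLim : ∀ ω, ∀ t : ℝ, 0 < t →
    ∃ l : ℝ, Tendsto (fun s => X s ω) (nhdsWithin t (Set.Iio t)) (nhds l)
  indepIncrements : ∀ s t : ℝ, 0 ≤ s → s ≤ t →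
    Indep (MeasurableSpace.comap (fun ω => X t ω - X s ω) inferInstance) (ℱ s) P
  stationary : ∀ s t : ℝ, 0 ≤ s → s ≤ t →
    Measure.map (fun ω => X t ω - X s ω) P = Measure.map (X (t - s)) P
  filtRightCont : ∀ t : ℝ, (ℱ t : MeasurableSpace Ω) = ⨅ s ∈ Set.Ioi t, (ℱ s : MeasurableSpace Ω)
  complete : ∀ N : Set Ω, MeasurableSet N → P N = 0 → MeasurableSet[ℱ 0] N

/-- `τ_x^+ < ∞`: the process passes strictly above level `x` at some nonnegative time. -/
def hitsAbove (X : ℝ → Ω → ℝ) (x : ℝ) (ω : Ω) : Prop := ∃ t, 0 ≤ t ∧ x < X t ω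

/-- First passage time above `x`:  `τ_x^+ = inf {t ≥ 0 : X_t > x}` (junk value if never). -/
def tauAbove (X : ℝ → Ω → ℝ) (x : ℝ) (ω : Ω) : ℝ := sInf {t : ℝ | 0 ≤ t ∧ x < X t ω}

/-- `τ_x^- < ∞`: the process passes strictly below level `x` at some nonnegative time. -/
def hitsBelow (X : ℝ → Ω → ℝ) (x : ℝ) (ω : Ω) : Prop := ∃ t, 0 ≤ t ∧ X t ω < x

/-- First passage time below `x`:  `τ_x^- = inf {t ≥ 0 : X_t < x}` (junk value if never). -/
def tauBelow (X : ℝ → Ω → ℝ) (x : ℝ) (ω : Ω) : ℝ := sInf {t : ℝ | 0 ≤ t ∧ X t ω < x}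

/-- The `[0,∞]`-valued first passage time `σ_x = inf { t ≥ 0 : x + X_t < y }`, with `inf ∅ = ∞`. -/
def hitBelowE (X : ℝ → Ω → ℝ) (y x : ℝ) (ω : Ω) : ℝ≥0∞ :=
  if ∃ t, 0 ≤ t ∧ x + X t ω < y then ENNReal.ofReal (sInf {t : ℝ | 0 ≤ t ∧ x + X t ω < y})
  else ∞

/-- The stopped clock `t ∧ σ_x` (real-valued), where `σ_x = inf{ t ≥ 0 : x + X_t < y}`. -/
def stoppedClock (X : ℝ → Ω → ℝ) (y x : ℝ) (t : ℝ) (ω : Ω) : ℝ :=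
  (min (ENNReal.ofReal t) (hitBelowE X y x ω)).toReal

/-- A `[0,∞]`-valued stopping time of the filtration `ℱ`. -/
def IsStopTime [m0 : MeasurableSpace Ω] (ℱ : Filtration ℝ m0) (τ : Ω → ℝ≥0∞) : Prop :=
  ∀ t : ℝ, 0 ≤ t → MeasurableSet[ℱ t] {ω | τ ω ≤ ENNReal.ofReal t}

/-- Discounted payoff `e^{-rτ} G(x + X_τ)` at a `[0,∞]`-valued time `τ`, set to `0` on `{τ = ∞}`. -/
def stopPayoff (X : ℝ → Ω → ℝ) (r x : ℝ) (G : ℝ → ℝ) (τ : Ω → ℝ≥0∞) (ω : Ω) : ℝ :=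
  if τ ω ≠ ∞ then Real.exp (-(r * (τ ω).toReal)) * G (x + X ((τ ω).toReal) ω) else 0

/-- Discounted American put payoff `e^{-rτ}(K - e^{x + X_τ})^+ 1_{τ < ∞}`. -/
def putPayoff (X : ℝ → Ω → ℝ) (r K x : ℝ) (τ : Ω → ℝ≥0∞) (ω : Ω) : ℝ :=
  stopPayoff X r x (fun z => max (K - Real.exp z) 0) τ ω

/-- Value function `v(x) = sup_τ E[e^{-rτ}(K - e^{x+X_τ})^+ 1_{τ<∞}]`, the supremum
being over all `[0,∞]`-valued stopping times of `ℱ`. -/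
def putValue [m0 : MeasurableSpace Ω] (P : Measure Ω) (ℱ : Filtration ℝ m0)
    (X : ℝ → Ω → ℝ) (r K x : ℝ) : ℝ :=
  ⨆ τ : {τ : Ω → ℝ≥0∞ // IsStopTime ℱ τ}, ∫ ω, putPayoff X r K x τ.1 ω ∂P

/-- `m = E[e^{X̲_{e_r}}]`, where `e_r` is an independent exponential time of rate `r > 0`,
and `e_0 = ∞`. -/
def mInf [m0 : MeasurableSpace Ω] (P : Measure Ω) (X : ℝ → Ω → ℝ) (r : ℝ) : ℝ :=
  if 0 < r then
    ∫ t in Set.Ioi (0 : ℝ), r * Real.exp (-(r * t)) * (∫ ω, Real.exp (runInf X t ω) ∂P)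
  else ∫ ω, Real.exp (infAll X ω) ∂P

/-- `P(X̲_{e_r} = 0)`, where `e_r` is an independent exponential time of rate `r > 0`,
and `e_0 = ∞`. -/
def atomZeroProb [m0 : MeasurableSpace Ω] (P : Measure Ω) (X : ℝ → Ω → ℝ) (r : ℝ) : ℝ :=
  if 0 < r then
    ∫ t in Set.Ioi (0 : ℝ), r * Real.exp (-(r * t)) * (P {ω | runInf X t ω = 0}).toReal
  else (P {ω | infAll X ω = 0}).toReal

/-- The event `{τ_0^- = 0}`: `0` is (pathwise) immediately reached from below, i.e.
`inf{t ≥ 0 : X_t < 0} = 0`. -/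
def regularBelow (X : ℝ → Ω → ℝ) : Set Ω :=
  {ω | ∀ ε > (0 : ℝ), ∃ t, 0 ≤ t ∧ t < ε ∧ X t ω < 0}

/-- `E[e^{-γ X̄_{e_α}}] = ∫_0^∞ α e^{-α t} E[e^{-γ X̄_t}] dt`. -/
def expSupLT [m0 : MeasurableSpace Ω] (P : Measure Ω) (X : ℝ → Ω → ℝ) (α γ : ℝ) : ℝ :=
  ∫ t in Set.Ioi (0 : ℝ), α * Real.exp (-(α * t)) * (∫ ω, Real.exp (-(γ * runSup X t ω)) ∂P)

/-- The function `h_{α,β}(x) = E[e^{-α σ_x + β (x + X_{σ_x})} 1_{σ_x < ∞}]`, where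
`σ_x = inf{t ≥ 0 : x + X_t < 0}`. -/
def hAB [m0 : MeasurableSpace Ω] (P : Measure Ω) (X : ℝ → Ω → ℝ) (α β : ℝ) (z : ℝ) : ℝ :=
  ∫ ω, (if hitsBelow X (-z) ω then
      Real.exp (-(α * tauBelow X (-z) ω) + β * (z + X (tauBelow X (-z) ω) ω)) else 0) ∂P

/-- `v_y(x) = E[e^{-r σ_x} (K - e^{x + X_{σ_x}})^+ 1_{σ_x<∞}]` where
`σ_x = inf{t ≥ 0 : x + X_t < y}`. -/
def vy [m0 : MeasurableSpace Ω] (P : Measure Ω) (X : ℝ → Ω → ℝ) (r K y : ℝ) (z : ℝ) : ℝ :=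
  ∫ ω, putPayoff X r K z (hitBelowE X y z) ω ∂P

/-- The process `f` (indexed by `t ≥ 0`) is a martingale with respect to `ℱ` and `P`. -/
def MartOn [m0 : MeasurableSpace Ω] (P : Measure Ω) (ℱ : Filtration ℝ m0)
    (f : ℝ → Ω → ℝ) : Prop :=
  (∀ t : ℝ, 0 ≤ t → StronglyMeasurable[ℱ t] (f t)) ∧
  (∀ t : ℝ, 0 ≤ t → Integrable (f t) P) ∧
  ∀ s t : ℝ, 0 ≤ s → s ≤ t → P[f t|ℱ s] =ᵐ[P] f s

/-- The process `f` (indexed by `t ≥ 0`) is a supermartingale w.r.t. `ℱ` and `P`. -/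
def SupermartOn [m0 : MeasurableSpace Ω] (P : Measure Ω) (ℱ : Filtration ℝ m0)
    (f : ℝ → Ω → ℝ) : Prop :=
  (∀ t : ℝ, 0 ≤ t → StronglyMeasurable[ℱ t] (f t)) ∧
  (∀ t : ℝ, 0 ≤ t → Integrable (f t) P) ∧
  ∀ s t : ℝ, 0 ≤ s → s ≤ t → P[f t|ℱ s] ≤ᵐ[P] f s


/-! The discounted value process `e^{-rt} V(x + X_t)` is a bounded right-continuous
supermartingale dominating the discounted payoff. Optional stopping at the dyadic approximations
`⌈2ⁿτ⌉ / 2ⁿ` of a stopping time `τ`, followed by dominated convergence (using `r > 0` on `{τ = ∞}`),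
bounds the value of every `τ` by `V x`. Stopped at `σ_x` the process is a bounded martingale, and
by right continuity `x + X_{σ_x} ≤ y`, where `V = G`; letting `t → ∞` shows that `σ_x` attains
`V x`. -/

open Topology

section RightContinuous

variable {g : ℝ → ℝ} {u v y : ℝ}

theorem ContinuousWithinAt.exists_rat_lt_of_lt (hg : ContinuousWithinAt g (Ici u) u)
    (hu : g u < y) (huv : u < v) : ∃ q : ℚ, u ≤ q ∧ (q : ℝ) < v ∧ g q < y := by
  obtain ⟨w, hwu, hsub⟩ := mem_nhdsGE_iff_exists_Ico_subset.1 (hg (Iio_mem_nhds hu))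
  obtain ⟨q, huq, hqv⟩ := exists_rat_btwn (lt_min hwu huv)
  exact ⟨q, huq.le, hqv.trans_le (min_le_right _ _),
    hsub ⟨huq.le, hqv.trans_le (min_le_left _ _)⟩⟩

theorem apply_sInf_setOf_lt_le (hg : ∀ t, 0 ≤ t → ContinuousWithinAt g (Ici t) t)
    (hne : ∃ t, 0 ≤ t ∧ g t < y) : g (sInf {t | 0 ≤ t ∧ g t < y}) ≤ y := by
  set S := {t | 0 ≤ t ∧ g t < y}
  have hbdd : BddBelow S := ⟨0, fun _ ht => ht.1⟩
  have hS0 : 0 ≤ sInf S := Real.sInf_nonneg fun _ ht => ht.1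
  by_contra! hlt
  obtain ⟨w, hw, hsub⟩ :=
    mem_nhdsGE_iff_exists_Ico_subset.1 (hg _ hS0 (Ioi_mem_nhds hlt))
  obtain ⟨t, htS, htw⟩ := exists_lt_of_csInf_lt hne hw
  exact (lt_asymm htS.2) (hsub ⟨csInf_le hbdd htS, htw⟩)

end RightContinuous

section StoppingTimes

variable [MeasurableSpace Ω] {ℱ : Filtration ℝ ‹_›}

theorem Filtration.isRightContinuous_of_eq_iInf
    (h : ∀ t : ℝ, (ℱ t : MeasurableSpace Ω) = ⨅ s ∈ Set.Ioi t, (ℱ s : MeasurableSpace Ω)) :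
    ℱ.IsRightContinuous :=
  ⟨fun t => by rw [Filtration.rightCont_eq, h t]; rfl⟩

theorem IsStopTime.of_measurableSet_lt [ℱ.IsRightContinuous] {τ : Ω → ℝ≥0∞}
    (hτ : ∀ u : ℝ, MeasurableSet[ℱ u] {ω | τ ω < ENNReal.ofReal u}) : IsStopTime ℱ τ := by
  let τ' : Ω → WithTop ℝ := fun ω => if τ ω = ∞ then ⊤ else ((τ ω).toReal : WithTop ℝ)
  have hlt : ∀ ω (u : ℝ), τ' ω < u ↔ τ ω < ENNReal.ofReal u := by
    intro ω u
    by_cases h : τ ω = ∞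
    · simp [τ', h]
    · simp [τ', h, ENNReal.lt_ofReal_iff_toReal_lt h]
  have hle : ∀ ω {t : ℝ}, 0 ≤ t → (τ' ω ≤ t ↔ τ ω ≤ ENNReal.ofReal t) := by
    intro ω t ht
    by_cases h : τ ω = ∞
    · simp [τ', h]
    · simp [τ', h, ENNReal.le_ofReal_iff_toReal_le h ht]
  have hτ' : IsStoppingTime ℱ τ' :=
    isStoppingTime_of_measurableSet_lt_of_isRightContinuous fun u => by
      simpa only [hlt] using hτ u
  intro t ht
  simpa only [hle _ ht] using hτ' t

end StoppingTimes

section HittingTime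

variable {X : ℝ → Ω → ℝ} {y x : ℝ} {ω : Ω}

theorem hitBelowE_lt_ofReal_iff
    (hRC : ∀ t : ℝ, 0 ≤ t → ContinuousWithinAt (fun s => X s ω) (Set.Ici t) t) {u : ℝ} :
    hitBelowE X y x ω < ENNReal.ofReal u ↔
      ∃ q : ℚ, 0 ≤ (q : ℝ) ∧ (q : ℝ) < u ∧ x + X q ω < y := by
  constructor
  · intro h
    unfold hitBelowE at h
    split_ifs at h with hne
    · have hlt := ((ENNReal.ofReal_lt_ofReal_iff'.1 h).1)
      obtain ⟨t, ⟨ht0, hty⟩, htu⟩ := exists_lt_of_csInf_lt hne hlt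
      obtain ⟨q, htq, hqu, hqy⟩ :=
        ContinuousWithinAt.exists_rat_lt_of_lt (g := fun s => x + X s ω)
          (continuousWithinAt_const.add (hRC t ht0)) hty htu
      exact ⟨q, ht0.trans htq, hqu, hqy⟩
    · exact absurd h (not_lt.2 le_top)
  · rintro ⟨q, hq0, hqu, hqy⟩
    have hne : ∃ t, 0 ≤ t ∧ x + X t ω < y := ⟨q, hq0, hqy⟩
    rw [hitBelowE, if_pos hne, ENNReal.ofReal_lt_ofReal_iff (hq0.trans_lt hqu)]
    exact (csInf_le (s := {t | 0 ≤ t ∧ x + X t ω < y}) ⟨0, fun _ ht => ht.1⟩ ⟨hq0, hqy⟩).trans_lt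
      hqu

theorem isStopTime_hitBelowE [MeasurableSpace Ω] {ℱ : Filtration ℝ ‹_›} [ℱ.IsRightContinuous]
    (hAdapted : ∀ t : ℝ, 0 ≤ t → StronglyMeasurable[ℱ t] (X t))
    (hRC : ∀ ω, ∀ t : ℝ, 0 ≤ t → ContinuousWithinAt (fun s => X s ω) (Set.Ici t) t) :
    IsStopTime ℱ (hitBelowE X y x) := by
  refine IsStopTime.of_measurableSet_lt fun u => ?_
  have hset : {ω | hitBelowE X y x ω < ENNReal.ofReal u} =
      ⋃ (q : ℚ) (_ : 0 ≤ (q : ℝ) ∧ (q : ℝ) < u), {ω | x + X q ω < y} := by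
    ext ω
    simp only [mem_ofPred_eq, mem_iUnion, hitBelowE_lt_ofReal_iff (hRC ω), exists_prop, and_assoc]
  rw [hset]
  refine MeasurableSet.iUnion fun q => MeasurableSet.iUnion fun hq => ?_
  exact ℱ.mono hq.2.le _
    ((measurable_const.add (hAdapted q hq.1).measurable) measurableSet_Iio)

theorem add_apply_hitBelowE_le
    (hRC : ∀ t : ℝ, 0 ≤ t → ContinuousWithinAt (fun s => X s ω) (Set.Ici t) t)
    (hσ : hitBelowE X y x ω ≠ ∞) : x + X (hitBelowE X y x ω).toReal ω ≤ y := by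
  unfold hitBelowE at hσ ⊢
  split_ifs at hσ ⊢ with hne
  · rw [ENNReal.toReal_ofReal (Real.sInf_nonneg fun _ ht => ht.1)]
    exact apply_sInf_setOf_lt_le (g := fun s => x + X s ω)
      (fun t ht => continuousWithinAt_const.add (hRC t ht)) hne
  · exact absurd rfl hσ

end HittingTime

def stoppedAt (f : ℝ → Ω → ℝ) (τ : Ω → ℝ≥0∞) (ω : Ω) : ℝ :=
  if τ ω ≠ ∞ then f (τ ω).toReal ω else 0

section Dyadic

def dyadicFiltration [MeasurableSpace Ω] (ℱ : Filtration ℝ ‹_›) (n : ℕ) : Filtration ℕ ‹_› where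
  seq k := ℱ ((k : ℝ) / 2 ^ n)
  mono' _ _ hkl := ℱ.mono (by gcongr)
  le' _ := ℱ.le _

/-- `⌈2ⁿ τ⌉`, capped at `n 2ⁿ` so that it is a bounded stopping time on the grid `ℕ / 2ⁿ`; the cap
is inactive once `n ≥ τ`. -/
def dyadicCeil (τ : Ω → ℝ≥0∞) (n : ℕ) (ω : Ω) : ℕ :=
  min (n * 2 ^ n) (if τ ω = ∞ then n * 2 ^ n else ⌈(τ ω).toReal * 2 ^ n⌉₊)

variable {τ : Ω → ℝ≥0∞} {ω : Ω}

theorem isStoppingTime_dyadicCeil [MeasurableSpace Ω] {ℱ : Filtration ℝ ‹_›}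
    (hτ : IsStopTime ℱ τ) (n : ℕ) :
    IsStoppingTime (dyadicFiltration ℱ n) (fun ω => WithTop.some (dyadicCeil τ n ω)) := by
  intro k
  simp only [WithTop.coe_le_coe]
  by_cases hk : n * 2 ^ n ≤ k
  · have : {ω | dyadicCeil τ n ω ≤ k} = univ :=
      eq_univ_of_forall fun ω => (min_le_left _ _).trans hk
    rw [this]
    exact MeasurableSet.univ
  · have hk0 : (0 : ℝ) ≤ k / 2 ^ n := by positivity
    have hset : {ω | dyadicCeil τ n ω ≤ k} = {ω | τ ω ≤ ENNReal.ofReal (k / 2 ^ n)} := by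
      ext ω
      by_cases hτω : τ ω = ∞
      · simp [dyadicCeil, hτω, hk]
      · simp [dyadicCeil, hτω, hk, Nat.ceil_le, ENNReal.le_ofReal_iff_toReal_le hτω hk0,
          le_div_iff₀]
    rw [hset]
    exact hτ _ hk0

theorem dyadicCeil_div_of_eq_top (hτ : τ ω = ∞) (n : ℕ) :
    (dyadicCeil τ n ω : ℝ) / 2 ^ n = n := by
  simp [dyadicCeil, hτ]

theorem tendsto_dyadicCeil_div (hτ : τ ω ≠ ∞) :
    Tendsto (fun n => (dyadicCeil τ n ω : ℝ) / 2 ^ n) atTop (𝓝[≥] (τ ω).toReal) := by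
  set s := (τ ω).toReal
  have hceil : Tendsto (fun n : ℕ => (⌈s * 2 ^ n⌉₊ : ℝ) / 2 ^ n) atTop (𝓝[≥] s) := by
    refine tendsto_nhdsWithin_iff.2 ⟨?_, Eventually.of_forall fun n => ?_⟩
    · exact (tendsto_nat_ceil_mul_div_atTop ENNReal.toReal_nonneg).comp
        (tendsto_pow_atTop_atTop_of_one_lt one_lt_two)
    · exact (le_div_iff₀ (by positivity : (0 : ℝ) < 2 ^ n)).2 (Nat.le_ceil _)
  refine hceil.congr' (eventually_atTop.2 ⟨⌈s⌉₊, fun n hn => ?_⟩)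
  have hsn : s ≤ n := (Nat.le_ceil s).trans (by exact_mod_cast hn)
  have hle : ⌈s * 2 ^ n⌉₊ ≤ n * 2 ^ n := by
    rw [Nat.ceil_le]; push_cast; gcongr
  simp only [dyadicCeil, if_neg hτ, min_eq_right hle, s]

theorem tendsto_stoppedValue_dyadicCeil {f : ℝ → Ω → ℝ}
    (hRC : ∀ t : ℝ, 0 ≤ t → ContinuousWithinAt (fun s => f s ω) (Ici t) t)
    (hinf : Tendsto (fun n : ℕ => f n ω) atTop (𝓝 0)) :
    Tendsto (fun n => stoppedValue (fun (k : ℕ) => f ((k : ℝ) / 2 ^ n))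
      (fun ω => WithTop.some (dyadicCeil τ n ω)) ω) atTop (𝓝 (stoppedAt f τ ω)) := by
  simp only [stoppedValue, WithTop.untopA, WithTop.untopD_coe]
  by_cases hτ : τ ω = ∞
  · simpa [stoppedAt, hτ, dyadicCeil_div_of_eq_top hτ] using hinf
  · rw [stoppedAt, if_pos hτ]
    exact (hRC _ ENNReal.toReal_nonneg).tendsto.comp (tendsto_dyadicCeil_div hτ)

end Dyadic

section OptionalStopping

variable [MeasurableSpace Ω] {P : Measure Ω} {ℱ : Filtration ℝ ‹_›} {f : ℝ → Ω → ℝ}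
  {τ : Ω → ℝ≥0∞} {C : ℝ}

theorem SupermartOn.supermartingale_dyadic (hf : SupermartOn P ℱ f) (n : ℕ) :
    Supermartingale (fun (k : ℕ) => f ((k : ℝ) / 2 ^ n)) (dyadicFiltration ℱ n) P := by
  obtain ⟨hadapt, hint, hcond⟩ := hf
  refine ⟨fun k => hadapt _ (by positivity), fun i j hij => hcond _ _ (by positivity) ?_,
    fun k => hint _ (by positivity)⟩
  gcongr

theorem Supermartingale.integral_stoppedValue_le {g : ℕ → Ω → ℝ} {𝒢 : Filtration ℕ ‹_›}
    [SigmaFiniteFiltration P 𝒢] (hg : Supermartingale g 𝒢 P) {κ : Ω → WithTop ℕ}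
    (hκ : IsStoppingTime 𝒢 κ) {N : ℕ} (hκN : ∀ ω, κ ω ≤ N) :
    ∫ ω, stoppedValue g κ ω ∂P ≤ ∫ ω, g 0 ω ∂P := by
  have h := hg.neg.expected_stoppedValue_mono (isStoppingTime_const 𝒢 0) hκ
    (fun _ => zero_le) hκN
  rw [stoppedValue_const] at h
  simpa [stoppedValue, integral_neg] using h

theorem SupermartOn.integral_stoppedAt_le [IsProbabilityMeasure P] (hf : SupermartOn P ℱ f)
    (hτ : IsStopTime ℱ τ) (hfC : ∀ t ω, 0 ≤ t → |f t ω| ≤ C)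
    (hRC : ∀ ω, ∀ t : ℝ, 0 ≤ t → ContinuousWithinAt (fun s => f s ω) (Ici t) t)
    (hinf : ∀ ω, Tendsto (fun n : ℕ => f n ω) atTop (𝓝 0)) :
    Integrable (stoppedAt f τ) P ∧ ∫ ω, stoppedAt f τ ω ∂P ≤ ∫ ω, f 0 ω ∂P := by
  set g : ℕ → Ω → ℝ := fun n => stoppedValue (fun (k : ℕ) => f ((k : ℝ) / 2 ^ n))
    (fun ω => WithTop.some (dyadicCeil τ n ω))
  have hbdd : ∀ n ω, WithTop.some (dyadicCeil τ n ω) ≤ (n * 2 ^ n : ℕ) :=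
    fun n ω => WithTop.coe_le_coe.2 (min_le_left _ _)
  have hg_int : ∀ n, Integrable (g n) P := fun n =>
    integrable_stoppedValue ℕ (isStoppingTime_dyadicCeil hτ n)
      (hf.supermartingale_dyadic n).integrable (hbdd n)
  have hg_le : ∀ n, ∫ ω, g n ω ∂P ≤ ∫ ω, f 0 ω ∂P := fun n => by
    simpa [g] using Supermartingale.integral_stoppedValue_le (hf.supermartingale_dyadic n)
      (isStoppingTime_dyadicCeil hτ n) (hbdd n)
  have hg_bdd : ∀ n ω, ‖g n ω‖ ≤ C := fun n ω => hfC _ _ (by positivity)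
  have hlim : ∀ ω, Tendsto (fun n => g n ω) atTop (𝓝 (stoppedAt f τ ω)) :=
    fun ω => tendsto_stoppedValue_dyadicCeil (hRC ω) (hinf ω)
  have hint : Integrable (stoppedAt f τ) P :=
    (integrable_const C).mono'
      (aestronglyMeasurable_of_tendsto_ae atTop (fun n => (hg_int n).1) (ae_of_all _ hlim))
      (ae_of_all _ fun ω => le_of_tendsto' (hlim ω).norm (hg_bdd · ω))
  refine ⟨hint, le_of_tendsto' (tendsto_integral_of_dominated_convergence (fun _ => C)
    (fun n => (hg_int n).1) (integrable_const C) (fun n => ae_of_all _ (hg_bdd n))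
    (ae_of_all _ hlim)) hg_le⟩

end OptionalStopping

theorem tendsto_stoppedAt_min {g : ℝ → Ω → ℝ} {τ : Ω → ℝ≥0∞} {ω : Ω}
    (hg : Tendsto (fun n : ℕ => g n ω) atTop (𝓝 0)) :
    Tendsto (fun n : ℕ => g (min (ENNReal.ofReal n) (τ ω)).toReal ω) atTop
      (𝓝 (stoppedAt g τ ω)) := by
  by_cases hτ : τ ω = ∞
  · simpa [stoppedAt, hτ] using hg
  · rw [stoppedAt, if_pos hτ]
    refine tendsto_atTop_of_eventually_const (i₀ := ⌈(τ ω).toReal⌉₊) fun n hn => ?_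
    rw [min_eq_right ((ENNReal.le_ofReal_iff_toReal_le hτ n.cast_nonneg).2
      ((Nat.le_ceil _).trans (by exact_mod_cast hn)))]

theorem MartOn.integral_eq_of_tendsto [MeasurableSpace Ω] {P : Measure Ω} [IsProbabilityMeasure P]
    {ℱ : Filtration ℝ ‹_›} {M : ℝ → Ω → ℝ} {L : Ω → ℝ} {C : ℝ} (hM : MartOn P ℱ M)
    (hMC : ∀ (n : ℕ) ω, |M n ω| ≤ C) (hlim : ∀ ω, Tendsto (fun n : ℕ => M n ω) atTop (𝓝 (L ω))) :
    ∫ ω, L ω ∂P = ∫ ω, M 0 ω ∂P := by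
  obtain ⟨hadapt, -, hcond⟩ := hM
  have hconst : ∀ n : ℕ, ∫ ω, M n ω ∂P = ∫ ω, M 0 ω ∂P := fun n =>
    (integral_condExp (ℱ.le 0)).symm.trans (integral_congr_ae (hcond 0 n le_rfl n.cast_nonneg))
  have hT := tendsto_integral_of_dominated_convergence (μ := P) (fun _ => C)
    (fun n => ((hadapt n n.cast_nonneg).mono (ℱ.le n)).aestronglyMeasurable)
    (integrable_const C) (fun n => ae_of_all _ (hMC n)) (ae_of_all _ hlim)
  simp only [hconst] at hT
  exact tendsto_nhds_unique hT tendsto_const_nhds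

section Discounted

variable {X : ℝ → Ω → ℝ} {r x t C : ℝ} {V : ℝ → ℝ} {ω : Ω}

def discounted (r : ℝ) (X : ℝ → Ω → ℝ) (x : ℝ) (V : ℝ → ℝ) (t : ℝ) (ω : Ω) : ℝ :=
  Real.exp (-(r * t)) * V (x + X t ω)

theorem stopPayoff_eq_stoppedAt (G : ℝ → ℝ) (τ : Ω → ℝ≥0∞) :
    stopPayoff X r x G τ = stoppedAt (discounted r X x G) τ :=
  rfl

theorem abs_discounted_le (hr : 0 ≤ r) (hV : ∀ z, |V z| ≤ C) (ht : 0 ≤ t) :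
    |discounted r X x V t ω| ≤ C := by
  rw [discounted, abs_mul, Real.abs_exp]
  exact (mul_le_of_le_one_left (abs_nonneg _) (Real.exp_le_one_iff.2 (by nlinarith))).trans (hV _)

theorem tendsto_discounted_nat (hr : 0 < r) (hV : ∀ z, |V z| ≤ C) :
    Tendsto (fun n : ℕ => discounted r X x V n ω) atTop (𝓝 0) := by
  have hexp : Tendsto (fun n : ℕ => Real.exp (-(r * n))) atTop (𝓝 0) :=
    Real.tendsto_exp_atBot.comp <| tendsto_neg_atTop_atBot.comp <|
      tendsto_natCast_atTop_atTop.const_mul_atTop hr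
  exact hexp.zero_mul_isBoundedUnder_le (isBoundedUnder_of ⟨C, fun n => hV _⟩)

theorem continuousWithinAt_discounted (hV : Continuous V)
    (hX : ContinuousWithinAt (fun s => X s ω) (Ici t) t) :
    ContinuousWithinAt (fun s => discounted r X x V s ω) (Ici t) t :=
  (Real.continuous_exp.comp (continuous_const.mul continuous_id).neg).continuousWithinAt.mul
    (hV.continuousAt.comp_continuousWithinAt (continuousWithinAt_const.add hX))

theorem integral_discounted_zero [MeasurableSpace Ω] {P : Measure Ω} [IsProbabilityMeasure P]
    (h0 : ∀ᵐ ω ∂P, X 0 ω = 0) : ∫ ω, discounted r X x V 0 ω ∂P = V x := by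
  have hconst : (fun ω => discounted r X x V 0 ω) =ᵐ[P] fun _ => V x := by
    filter_upwards [h0] with ω hω
    simp [discounted, hω]
  simp [integral_congr_ae hconst]

theorem stoppedAt_discounted_mono {G : ℝ → ℝ} (hGV : ∀ z, G z ≤ V z) (τ : Ω → ℝ≥0∞) :
    stoppedAt (discounted r X x G) τ ω ≤ stoppedAt (discounted r X x V) τ ω := by
  unfold stoppedAt discounted
  split_ifs
  · exact mul_le_mul_of_nonneg_left (hGV _) (Real.exp_pos _).le
  · rfl

theorem stoppedAt_discounted_nonneg {G : ℝ → ℝ} (hG : ∀ z, 0 ≤ G z) (τ : Ω → ℝ≥0∞) :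
    0 ≤ stoppedAt (discounted r X x G) τ ω := by
  unfold stoppedAt discounted
  split_ifs
  · exact mul_nonneg (Real.exp_pos _).le (hG _)
  · rfl

theorem stoppedAt_discounted_hitBelowE {G : ℝ → ℝ} {y : ℝ} (hVG : ∀ z, z ≤ y → V z = G z)
    (hRC : ∀ t : ℝ, 0 ≤ t → ContinuousWithinAt (fun s => X s ω) (Ici t) t) :
    stoppedAt (discounted r X x V) (hitBelowE X y x) ω =
      stoppedAt (discounted r X x G) (hitBelowE X y x) ω := by
  unfold stoppedAt discounted
  split_ifs with hσ
  · rw [hVG _ (add_apply_hitBelowE_le hRC hσ)]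
  · rfl

end Discounted

theorem stmt15_general [m0 : MeasurableSpace Ω] (P : Measure Ω) [IsProbabilityMeasure P]
    (ℱ : Filtration ℝ m0)
    (hfiltRC : ∀ t : ℝ, (ℱ t : MeasurableSpace Ω) = ⨅ s ∈ Set.Ioi t, (ℱ s : MeasurableSpace Ω))
    (X : ℝ → Ω → ℝ)
    (hAdapted : ∀ t : ℝ, 0 ≤ t → StronglyMeasurable[ℱ t] (X t))
    (hRC : ∀ ω, ∀ t : ℝ, 0 ≤ t → ContinuousWithinAt (fun s => X s ω) (Set.Ici t) t)
    (h0 : ∀ᵐ ω ∂P, X 0 ω = 0)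
    (r K y : ℝ) (hr : 0 < r)
    (V : ℝ → ℝ) (hVbdd : ∃ C, ∀ z, |V z| ≤ C) (hVcont : Continuous V)
    (hmart : ∀ x : ℝ, MartOn P ℱ (fun t ω =>
      Real.exp (-(r * stoppedClock X y x t ω)) * V (x + X (stoppedClock X y x t ω) ω)))
    (hsuper : ∀ x : ℝ, SupermartOn P ℱ (fun t ω => Real.exp (-(r * t)) * V (x + X t ω)))
    (hpaste : ∀ z : ℝ, z ≤ y → V z = max (K - Real.exp z) 0)
    (hdom : ∀ z : ℝ, max (K - Real.exp z) 0 ≤ V z) :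
    ∀ x : ℝ,
      V x = (⨆ τ : {τ : Ω → ℝ≥0∞ // IsStopTime ℱ τ},
          ∫ ω, stopPayoff X r x (fun z => max (K - Real.exp z) 0) τ.1 ω ∂P) ∧
      (∫ ω, stopPayoff X r x (fun z => max (K - Real.exp z) 0) (hitBelowE X y x) ω ∂P) =
        V x := by
  obtain ⟨C, hVC⟩ := hVbdd
  have := Filtration.isRightContinuous_of_eq_iInf hfiltRC
  intro x
  simp only [stopPayoff_eq_stoppedAt]
  have hσ : IsStopTime ℱ (hitBelowE X y x) := isStopTime_hitBelowE hAdapted hRC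
  have hfC (t : ℝ) (ω : Ω) (ht : 0 ≤ t) : |discounted r X x V t ω| ≤ C :=
    abs_discounted_le hr.le hVC ht
  have hattain : ∫ ω, stoppedAt (discounted r X x (fun z => max (K - Real.exp z) 0))
      (hitBelowE X y x) ω ∂P = V x := calc
    _ = ∫ ω, stoppedAt (discounted r X x V) (hitBelowE X y x) ω ∂P :=
      integral_congr_ae (ae_of_all _ fun ω => (stoppedAt_discounted_hitBelowE hpaste (hRC ω)).symm)
    _ = ∫ ω, discounted r X x V (stoppedClock X y x 0 ω) ω ∂P :=
      (hmart x).integral_eq_of_tendsto (fun n ω => hfC _ _ ENNReal.toReal_nonneg)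
        fun ω => tendsto_stoppedAt_min (tendsto_discounted_nat hr hVC)
    _ = V x := by simpa [stoppedClock] using integral_discounted_zero h0
  have hupper (τ : Ω → ℝ≥0∞) (hτ : IsStopTime ℱ τ) :
      ∫ ω, stoppedAt (discounted r X x (fun z => max (K - Real.exp z) 0)) τ ω ∂P ≤ V x := by
    obtain ⟨hint, hle⟩ := (hsuper x).integral_stoppedAt_le hτ hfC
      (fun ω t ht => continuousWithinAt_discounted hVcont (hRC ω t ht))
      fun ω => tendsto_discounted_nat hr hVC
    calc _ ≤ ∫ ω, stoppedAt (discounted r X x V) τ ω ∂P :=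
          integral_mono_of_nonneg
            (ae_of_all _ fun ω => stoppedAt_discounted_nonneg (fun _ => le_max_right _ _) τ)
            hint (ae_of_all _ fun ω => stoppedAt_discounted_mono hdom τ)
      _ ≤ ∫ ω, discounted r X x V 0 ω ∂P := hle
      _ = V x := integral_discounted_zero h0
  have : Nonempty {τ : Ω → ℝ≥0∞ // IsStopTime ℱ τ} := ⟨⟨_, hσ⟩⟩
  exact ⟨le_antisymm
    (le_ciSup_of_le ⟨V x, forall_mem_range.2 fun τ => hupper τ.1 τ.2⟩ ⟨_, hσ⟩ hattain.ge)
    (ciSup_le fun τ => hupper τ.1 τ.2), hattain⟩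

theorem stmt15 [m0 : MeasurableSpace Ω] (P : Measure Ω) [IsProbabilityMeasure P]
    (ℱ : Filtration ℝ m0)
    (hfiltRC : ∀ t : ℝ, (ℱ t : MeasurableSpace Ω) = ⨅ s ∈ Set.Ioi t, (ℱ s : MeasurableSpace Ω))
    (hcomplete : ∀ N : Set Ω, MeasurableSet N → P N = 0 → MeasurableSet[ℱ 0] N)
    (X : ℝ → Ω → ℝ)
    (hAdapted : ∀ t : ℝ, 0 ≤ t → StronglyMeasurable[ℱ t] (X t))
    (hRC : ∀ ω, ∀ t : ℝ, 0 ≤ t → ContinuousWithinAt (fun s => X s ω) (Set.Ici t) t)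
    (h0 : ∀ᵐ ω ∂P, X 0 ω = 0)
    (r K y : ℝ) (hr : 0 < r) (hK : 0 < K)
    (V : ℝ → ℝ) (hVbdd : ∃ C, ∀ z, |V z| ≤ C) (hVcont : Continuous V)
    (hmart : ∀ x : ℝ, MartOn P ℱ (fun t ω =>
      Real.exp (-(r * stoppedClock X y x t ω)) * V (x + X (stoppedClock X y x t ω) ω)))
    (hsuper : ∀ x : ℝ, SupermartOn P ℱ (fun t ω => Real.exp (-(r * t)) * V (x + X t ω)))
    (hpaste : ∀ z : ℝ, z ≤ y → V z = max (K - Real.exp z) 0)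
    (hdom : ∀ z : ℝ, max (K - Real.exp z) 0 ≤ V z) :
    ∀ x : ℝ,
      V x = (⨆ τ : {τ : Ω → ℝ≥0∞ // IsStopTime ℱ τ},
          ∫ ω, stopPayoff X r x (fun z => max (K - Real.exp z) 0) τ.1 ω ∂P) ∧
      (∫ ω, stopPayoff X r x (fun z => max (K - Real.exp z) 0) (hitBelowE X y x) ω ∂P) =
        V x :=
  stmt15_general (m0 := m0) P ℱ hfiltRC X hAdapted hRC h0 r K y hr V hVbdd hVcont hmart hsuper
    hpaste hdom

end AKLevy
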